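/- arXiv:2410.06789 — 10 statements merged into one kernel-verified Lean document; each statement's English description precedes it below -/
import Mathlib

section
/- Let k ≥ 1 be an integer and α ∈ ℂ. Then |α(α+1)⋯(α+k-1)|/k! ≤ e^{|α|-1} k^{|α|-1} if |α| > 1, and |α(α+1)⋯(α+k-1)|/k! ≤ (k+1)^{-(1-|α|)} if |α| ≤ 1. In particular, |binom(α,k)| ≤ (|α|)_k / k! ≤ e^{|α|} k^{|α|} for k ≥ 1. -/
/-!
Writing `(a)_k / k! = ∏_{i<k} (a + i) / (i + 1) = ∏_{i<k} (1 + (a - 1) / (i + 1))` and using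
`1 + x ≤ eˣ` factorwise gives `(a)_k / k! ≤ exp ((a - 1) H_k)` for `a ≥ 0`. The harmonic bounds
`log (k + 1) ≤ H_k ≤ 1 + log k` then give the two estimates, according to the sign of `a - 1`.
For complex `α`, the triangle inequality bounds `|(α)_k|` and `|α(α-1)⋯(α-k+1)|` by `(|α|)_k`.
-/

open Finset

section NormBounds

variable {R : Type*} [NormedCommRing R] [NormOneClass R]

lemma norm_natCast_le_self (n : ℕ) : ‖(n : R)‖ ≤ n := by
  simpa using Nat.norm_cast_le (α := R) n

lemma norm_prod_add_natCast_le (α : R) (k : ℕ) :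
    ‖∏ i ∈ range k, (α + (i : R))‖ ≤ ∏ i ∈ range k, (‖α‖ + (i : ℝ)) :=
  (Finset.norm_prod_le _ _).trans <| prod_le_prod (fun _ _ => norm_nonneg _) fun i _ =>
    (norm_add_le _ _).trans (add_le_add_right (norm_natCast_le_self i) _)

lemma norm_prod_sub_natCast_le (α : R) (k : ℕ) :
    ‖∏ i ∈ range k, (α - (i : R))‖ ≤ ∏ i ∈ range k, (‖α‖ + (i : ℝ)) :=
  (Finset.norm_prod_le _ _).trans <| prod_le_prod (fun _ _ => norm_nonneg _) fun i _ =>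
    (norm_sub_le _ _).trans (add_le_add_right (norm_natCast_le_self i) _)

end NormBounds

lemma add_natCast_div_le_exp (a : ℝ) (i : ℕ) :
    (a + i) / (i + 1) ≤ Real.exp ((a - 1) / (i + 1)) := by
  have hi : (i : ℝ) + 1 ≠ 0 := by positivity
  calc (a + i) / (i + 1) = (a - 1) / (i + 1) + 1 := by field_simp; ring
    _ ≤ _ := Real.add_one_le_exp _

lemma prod_add_natCast_div_factorial_le_exp_harmonic {a : ℝ} (ha : 0 ≤ a) (k : ℕ) :
    (∏ i ∈ range k, (a + (i : ℝ))) / k.factorial ≤ Real.exp ((a - 1) * harmonic k) := by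
  have hfactorial : (k.factorial : ℝ) = ∏ i ∈ range k, ((i : ℝ) + 1) := by
    rw [← prod_range_add_one_eq_factorial]; push_cast; rfl
  have hharmonic : (harmonic k : ℝ) = ∑ i ∈ range k, ((i : ℝ) + 1)⁻¹ := by
    simp [harmonic]
  rw [hfactorial, ← prod_div_distrib, hharmonic, mul_sum, Real.exp_sum]
  exact prod_le_prod (fun _ _ => by positivity) fun i _ => by
    simpa only [div_eq_mul_inv] using add_natCast_div_le_exp a i

lemma exp_mul_one_add_log {x : ℝ} (hx : 0 < x) (c : ℝ) :
    Real.exp (c * (1 + Real.log x)) = Real.exp c * x ^ c := by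
  rw [Real.rpow_def_of_pos hx, ← Real.exp_add]; ring_nf

/-- Let `k ≥ 1` and `α ∈ ℂ`.  Then `|α(α+1)⋯(α+k-1)|/k! ≤ e^{|α|-1} k^{|α|-1}` if
`|α| > 1`, and `|α(α+1)⋯(α+k-1)|/k! ≤ (k+1)^{-(1-|α|)}` if `|α| ≤ 1`.  In particular,
`|binom(α,k)| ≤ (|α|)_k / k! ≤ e^{|α|} k^{|α|}`. -/
theorem pochhammer_abs_estimates (k : ℕ) (hk : 1 ≤ k) (α : ℂ) :
    (1 < ‖α‖ →
      ‖∏ i ∈ range k, (α + (i : ℂ))‖ / (k.factorial : ℝ) ≤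
        Real.exp (‖α‖ - 1) * (k : ℝ) ^ (‖α‖ - 1)) ∧
    (‖α‖ ≤ 1 →
      ‖∏ i ∈ range k, (α + (i : ℂ))‖ / (k.factorial : ℝ) ≤
        ((k : ℝ) + 1) ^ (-(1 - ‖α‖))) ∧
    ‖∏ i ∈ range k, (α - (i : ℂ))‖ / (k.factorial : ℝ) ≤
      (∏ i ∈ range k, (‖α‖ + (i : ℝ))) / (k.factorial : ℝ) ∧
    (∏ i ∈ range k, (‖α‖ + (i : ℝ))) / (k.factorial : ℝ) ≤
      Real.exp (‖α‖) * (k : ℝ) ^ (‖α‖) := by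
  set a := ‖α‖
  have hk₀ : (0 : ℝ) < k := by exact_mod_cast hk
  have hH_upper : (harmonic k : ℝ) ≤ 1 + Real.log k := harmonic_le_one_add_log k
  have hH_lower : Real.log (k + 1) ≤ (harmonic k : ℝ) := by
    exact_mod_cast log_add_one_le_harmonic k
  have hH_nonneg : (0 : ℝ) ≤ harmonic k :=
    (Real.log_nonneg (by linarith)).trans hH_lower
  have hmain := prod_add_natCast_div_factorial_le_exp_harmonic (norm_nonneg α) k
  have hplus : ‖∏ i ∈ range k, (α + (i : ℂ))‖ / k.factorial ≤ Real.exp ((a - 1) * harmonic k) :=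
    (div_le_div_of_nonneg_right (norm_prod_add_natCast_le α k) (by positivity)).trans hmain
  refine ⟨fun ha => ?_, fun ha => ?_, ?_, ?_⟩
  · rw [← exp_mul_one_add_log hk₀]
    exact hplus.trans (Real.exp_le_exp.mpr (by gcongr))
  · rw [Real.rpow_def_of_pos (by positivity)]
    exact hplus.trans (Real.exp_le_exp.mpr (by nlinarith))
  · exact div_le_div_of_nonneg_right (norm_prod_sub_natCast_le α k) (by positivity)
  · rw [← exp_mul_one_add_log hk₀]
    exact hmain.trans (Real.exp_le_exp.mpr (by nlinarith [norm_nonneg α]))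
end

section
/- Let K be a field of characteristic 0, Δ(P)(t) = P(t-1) − P(t) the backward difference operator on K[t], and Δ₁(P)(t) = P(t+1) − P(t) the forward difference, with τ₁(P)(t) = P(t+1). Then for every positive integer n and every P ∈ K[t], the operator identity [P(t)]∘Δ^n = Σ_{j=0}^n C(n,j) Δ^{n-j} ∘ [τ₁^{n-j}(Δ₁^j(P))] holds in End_K(K[t]), where [Q] denotes multiplication by the polynomial Q. -/
/-!
Write `Δ` for the backward difference and `[Q]` for multiplication by `Q`. The whole identity
follows from the single commutation rule `[P] ∘ Δ = Δ ∘ [τ₁ P] + [Δ₁ P]`. On maps `Φ : K[t] → End`,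
right composition with `Δ` therefore agrees at `Φ = [·]` with `U + V`, where `(U Φ) P = Δ ∘ Φ (τ₁ P)`
and `(V Φ) P = Φ (Δ₁ P)`. Right composition with `Δ` commutes with `U` and `V`, and `U`, `V`
commute with each other because `τ₁` and `Δ₁` do, so the `n`-th power is given by the binomial
theorem for `(U + V) ^ n`.
-/

open Polynomial Finset

/-- Backward difference operator `Δ(P)(t) = P(t-1) - P(t)` on `K[t]`. -/
noncomputable def bdiff {K : Type*} [Field K] (P : Polynomial K) : Polynomial K :=
  P.comp (X - 1) - P

/-- Forward difference operator `Δ₁(P)(t) = P(t+1) - P(t)` on `K[t]`. -/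
noncomputable def fdiff {K : Type*} [Field K] (P : Polynomial K) : Polynomial K :=
  P.comp (X + 1) - P

/-- Forward shift operator `τ₁(P)(t) = P(t+1)` on `K[t]`. -/
noncomputable def fshift {K : Type*} [Field K] (P : Polynomial K) : Polynomial K :=
  P.comp (X + 1)

theorem pow_smul_eq_pow_smul_of_commute {G α : Type*} [Monoid G] [MulAction G α] {a b : G}
    (hab : Commute a b) {x : α} (hx : a • x = b • x) (n : ℕ) : a ^ n • x = b ^ n • x := by
  induction n with
  | zero => simp
  | succ n ih =>
    rw [pow_succ, mul_smul, hx, ← mul_smul, (hab.pow_left n).eq, mul_smul, ih, ← mul_smul,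
      ← pow_succ']

section TwistedBinomial

variable {M A : Type*} [Semiring A]

def mulLeftPrecomp (d : A) (s : M → M) : Module.End ℕ (M → A) :=
  (LinearMap.mulLeft ℕ d).compLeft M ∘ₗ LinearMap.funLeft ℕ A s

def mulRightPointwise (M : Type*) (d : A) : Module.End ℕ (M → A) :=
  (LinearMap.mulRight ℕ d).compLeft M

@[simp]
theorem mulLeftPrecomp_apply (d : A) (s : M → M) (Φ : M → A) (p : M) :
    mulLeftPrecomp d s Φ p = d * Φ (s p) := rfl

@[simp]
theorem mulRightPointwise_apply (d : A) (Φ : M → A) (p : M) :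
    mulRightPointwise M d Φ p = Φ p * d := rfl

theorem mulLeftPrecomp_pow_apply (d : A) (s : M → M) (k : ℕ) (Φ : M → A) (p : M) :
    (mulLeftPrecomp d s ^ k) Φ p = d ^ k * Φ (s^[k] p) := by
  induction k generalizing p with
  | zero => simp
  | succ k ih =>
    rw [pow_succ', Module.End.mul_apply, mulLeftPrecomp_apply, ih, ← mul_assoc, ← pow_succ',
      Function.iterate_succ_apply]

theorem funLeft_pow_apply (f : M → M) (j : ℕ) (Φ : M → A) (p : M) :
    (LinearMap.funLeft ℕ A f ^ j) Φ p = Φ (f^[j] p) := by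
  induction j generalizing p with
  | zero => simp
  | succ j ih =>
    rw [pow_succ', Module.End.mul_apply, LinearMap.funLeft_apply, ih, Function.iterate_succ_apply]

theorem mulRightPointwise_pow_apply (d : A) (n : ℕ) (Φ : M → A) (p : M) :
    (mulRightPointwise M d ^ n) Φ p = Φ p * d ^ n := by
  induction n with
  | zero => simp
  | succ n ih =>
    rw [pow_succ', Module.End.mul_apply, mulRightPointwise_apply, ih, pow_succ, mul_assoc]

theorem commute_mulLeftPrecomp_funLeft (d : A) {s f : M → M} (hsf : Function.Commute s f) :
    Commute (mulLeftPrecomp d s) (LinearMap.funLeft ℕ A f) := by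
  ext Φ p
  simp [hsf.eq]

theorem commute_mulRightPointwise_mulLeftPrecomp (d e : A) (s : M → M) :
    Commute (mulRightPointwise M d) (mulLeftPrecomp e s) := by
  ext Φ p
  simp [mul_assoc]

theorem commute_mulRightPointwise_funLeft (d : A) (f : M → M) :
    Commute (mulRightPointwise M d) (LinearMap.funLeft ℕ A f) := by
  ext Φ p
  simp

theorem mul_pow_eq_sum_choose_of_mul_eq {d : A} {s f : M → M} {L : M → A}
    (hsf : Function.Commute s f) (hL : ∀ p, L p * d = d * L (s p) + L (f p)) (n : ℕ) (p : M) :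
    L p * d ^ n = ∑ j ∈ range (n + 1), n.choose j • (d ^ (n - j) * L (s^[n - j] (f^[j] p))) := by
  set U := mulLeftPrecomp d s
  set V := LinearMap.funLeft ℕ A f
  have hstep : mulRightPointwise M d • L = (V + U) • L := by
    ext p
    simp [U, V, hL, add_comm]
  have hcomm : Commute (mulRightPointwise M d) (V + U) :=
    (commute_mulRightPointwise_funLeft d f).add_right
      (commute_mulRightPointwise_mulLeftPrecomp d d s)
  have h := congrFun (pow_smul_eq_pow_smul_of_commute hcomm hstep n) p
  rw [(commute_mulLeftPrecomp_funLeft d hsf).symm.add_pow] at h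
  simpa only [Module.End.smul_def, mulRightPointwise_pow_apply, LinearMap.sum_apply,
    Finset.sum_apply, Module.End.mul_apply, Module.End.natCast_apply, funLeft_pow_apply,
    mulLeftPrecomp_pow_apply, Pi.smul_apply, mul_smul_comm] using h

end TwistedBinomial

section Differences

variable {K : Type*} [Field K]

theorem commute_fshift_fdiff : Function.Commute (fshift (K := K)) fdiff := fun P => by
  simp [fdiff, fshift, sub_comp]

theorem mul_bdiff (P R : K[X]) : P * bdiff R = bdiff (fshift P * R) + fdiff P * R := by
  have h : ((X : K[X]) + 1).comp (X - 1) = X := by simp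
  simp only [bdiff, fdiff, fshift, mul_comp, comp_assoc, h, comp_X]
  ring

noncomputable def bdiffLinear : Module.End K K[X] :=
  (aeval (X - 1 : K[X])).toLinearMap - LinearMap.id

theorem coe_bdiffLinear : ⇑(bdiffLinear (K := K)) = bdiff := rfl

theorem mulLeft_mul_bdiffLinear (P : K[X]) :
    LinearMap.mulLeft K P * bdiffLinear =
      bdiffLinear * LinearMap.mulLeft K (fshift P) + LinearMap.mulLeft K (fdiff P) :=
  LinearMap.ext (mul_bdiff P)

end Differences

theorem mul_comp_bdiff_pow_general {K : Type*} [Field K] (n : ℕ)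
    (P : Polynomial K) :
    ∀ R : Polynomial K,
      P * bdiff^[n] R =
        ∑ j ∈ range (n + 1),
          (n.choose j : Polynomial K) * bdiff^[n - j] ((fshift^[n - j] (fdiff^[j] P)) * R) := by
  intro R
  have h := LinearMap.congr_fun
    (mul_pow_eq_sum_choose_of_mul_eq commute_fshift_fdiff mulLeft_mul_bdiffLinear n P) R
  simpa only [Module.End.mul_apply, Module.End.pow_apply, LinearMap.mulLeft_apply,
    LinearMap.sum_apply, Module.End.natCast_apply, nsmul_eq_mul, coe_bdiffLinear] using h

/-- Operator identity in `End_K(K[t])`: for `n ≥ 1` and `P ∈ K[t]`,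
`[P(t)] ∘ Δ^n = Σ_{j=0}^n C(n,j) Δ^{n-j} ∘ [τ₁^{n-j}(Δ₁^j(P))]`,
where `[Q]` is multiplication by `Q`, applied to an arbitrary polynomial `R`. -/
theorem mul_comp_bdiff_pow {K : Type*} [Field K] [CharZero K] (n : ℕ) (hn : 1 ≤ n)
    (P : Polynomial K) :
    ∀ R : Polynomial K,
      P * bdiff^[n] R =
        ∑ j ∈ range (n + 1),
          (n.choose j : Polynomial K) * bdiff^[n - j] ((fshift^[n - j] (fdiff^[j] P)) * R) :=
  mul_comp_bdiff_pow_general n P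
end

section
/- Let K be a field of characteristic 0, let d ≥ 1 and m_1,…,m_d, n ≥ 1 be integers, let α_1,…,α_d ∈ K, and set A(t) = Π_{i=1}^d (t+α_i)^{m_i+1} and A_n(t) = Π_{i=1}^d ((t+α_i)(t+α_i+1)⋯(t+α_i+n-1))^{m_i+1}. If P(t) ∈ A_n(t)·K[t] and Q(t) ∈ K[t] has degree < n, then Q(t)·Δ^n(P)(t) lies in Δ(A(t)·K[t]), where Δ(R)(t) = R(t-1) − R(t). -/
open Polynomial Finset

/-!
Summation by parts: writing `U(t) = Q(t+1)`, the discrete Leibniz rule gives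
`Q · Δ(V) = Δ(U · V) - Δ(U) · V`, and `deg Δ(U) < deg Q`. Applied to `V = Δ^{n-1}(P)` this
reduces the claim for `(Q, n)` to the claim for `(Δ(U), n - 1)`, provided `A` divides
`Δ^k(P)` for every `k < n`. That divisibility holds because `Δ` lowers the length of the
Pochhammer factors `(t+α)_n` dividing `P` by one, and `(t+α)_1 = t+α`.
-/

/-- The Pochhammer symbol `(X + a)_n` of the paper. -/
noncomputable def pochhammerAt {R : Type*} [CommSemiring R] (a : R) (n : ℕ) : R[X] :=
  ∏ j ∈ range n, (X + C a + (j : R[X]))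

section Pochhammer

variable {R : Type*} [CommSemiring R] (a : R) {ι : Type*} [Fintype ι] (e : ι → ℕ) (α : ι → R)

theorem pochhammerAt_one : pochhammerAt a 1 = X + C a := by
  simp [pochhammerAt]

theorem pochhammerAt_dvd_of_le {l n : ℕ} (h : l ≤ n) : pochhammerAt a l ∣ pochhammerAt a n :=
  prod_dvd_prod_of_subset _ _ _ (range_subset_range.2 h)

theorem prod_pochhammerAt_pow_dvd_of_le {l n : ℕ} (h : l ≤ n) :
    ∏ i, pochhammerAt (α i) l ^ e i ∣ ∏ i, pochhammerAt (α i) n ^ e i :=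
  prod_dvd_prod_of_dvd _ _ fun _ _ => pow_dvd_pow_of_dvd (pochhammerAt_dvd_of_le _ h) _

end Pochhammer

section PochhammerShift

variable {R : Type*} [CommRing R] (a : R) {ι : Type*} [Fintype ι] (e : ι → ℕ) (α : ι → R)

theorem pochhammerAt_succ_comp_X_sub_one (n : ℕ) :
    (pochhammerAt a (n + 1)).comp (X - 1) = (X + C a - 1) * pochhammerAt a n := by
  rw [pochhammerAt, prod_range_succ', mul_comp, Polynomial.prod_comp, mul_comm]
  congr 1
  · simp only [Nat.cast_zero, add_zero, add_comp, X_comp, C_comp]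
    ring
  · refine prod_congr rfl fun j _ => ?_
    simp only [Nat.cast_add, Nat.cast_one, add_comp, X_comp, C_comp, natCast_comp, one_comp]
    ring

theorem prod_pochhammerAt_pow_dvd_comp_X_sub_one (n : ℕ) :
    ∏ i, pochhammerAt (α i) n ^ e i ∣ (∏ i, pochhammerAt (α i) (n + 1) ^ e i).comp (X - 1) := by
  simp only [Polynomial.prod_comp, pow_comp, pochhammerAt_succ_comp_X_sub_one]
  exact prod_dvd_prod_of_dvd _ _ fun _ _ => pow_dvd_pow_of_dvd (dvd_mul_left _ _) _

end PochhammerShift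

section BackwardDifference

variable {K : Type*} [Field K]

theorem bdiff_eq_taylor_sub (P : K[X]) : bdiff P = taylor (-1) P - P := by
  rw [bdiff, taylor_apply, C_neg, C_1, ← sub_eq_add_neg]

theorem bdiff_sub (P Q : K[X]) : bdiff (P - Q) = bdiff P - bdiff Q := by
  simp only [bdiff, sub_comp]
  ring

theorem bdiff_mul (U V : K[X]) : bdiff (U * V) = taylor (-1) U * bdiff V + bdiff U * V := by
  simp only [bdiff_eq_taylor_sub, taylor_mul]
  ring

theorem degree_bdiff_lt {P : K[X]} (hP : P ≠ 0) : (bdiff P).degree < P.degree := by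
  rw [bdiff_eq_taylor_sub]
  exact degree_sub_lt_right (degree_taylor P _) hP (leadingCoeff_taylor _ _)

theorem degree_bdiff_lt_of_degree_lt_succ {P : K[X]} {n : ℕ} (hP : P.degree < ↑(n + 1)) :
    (bdiff P).degree < n := by
  rcases eq_or_ne P 0 with rfl | hP0
  · simp [bdiff]
  · exact (degree_bdiff_lt hP0).trans_le (Order.lt_succ_iff.mp (by exact_mod_cast hP))

theorem mul_bdiff_eq (Q V : K[X]) :
    Q * bdiff V = bdiff (taylor 1 Q * V) - bdiff (taylor 1 Q) * V := by
  rw [bdiff_mul, taylor_taylor, neg_add_cancel, taylor_zero]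
  ring

theorem exists_mul_bdiff_iterate_eq_bdiff_mul {A P : K[X]} {n : ℕ}
    (hA : ∀ k < n, A ∣ bdiff^[k] P) {Q : K[X]} (hQ : Q.degree < n) :
    ∃ R, Q * bdiff^[n] P = bdiff (A * R) := by
  induction n generalizing Q with
  | zero =>
    obtain rfl : Q = 0 := degree_eq_bot.mp (by simpa using hQ)
    exact ⟨0, by simp [bdiff]⟩
  | succ n ih =>
    obtain ⟨W, hW⟩ := hA n n.lt_succ_self
    have hU : (bdiff (taylor 1 Q)).degree < n :=
      degree_bdiff_lt_of_degree_lt_succ (by rwa [degree_taylor])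
    obtain ⟨R, hR⟩ := ih (fun k hk => hA k (hk.trans n.lt_succ_self)) hU
    refine ⟨taylor 1 Q * W - R, ?_⟩
    rw [Function.iterate_succ_apply', mul_bdiff_eq, hR, hW, mul_sub, bdiff_sub,
      mul_left_comm]

variable {ι : Type*} [Fintype ι] (e : ι → ℕ) (α : ι → K)

theorem prod_pochhammerAt_pow_dvd_bdiff {n : ℕ} {P : K[X]}
    (hP : ∏ i, pochhammerAt (α i) (n + 1) ^ e i ∣ P) :
    ∏ i, pochhammerAt (α i) n ^ e i ∣ bdiff P := by
  obtain ⟨W, rfl⟩ := hP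
  rw [bdiff, mul_comp]
  exact dvd_sub (dvd_mul_of_dvd_left (prod_pochhammerAt_pow_dvd_comp_X_sub_one e α n) _)
    (dvd_mul_of_dvd_left (prod_pochhammerAt_pow_dvd_of_le e α n.le_succ) _)

theorem prod_pochhammerAt_pow_dvd_bdiff_iterate {k l : ℕ} {P : K[X]}
    (hP : ∏ i, pochhammerAt (α i) (k + l) ^ e i ∣ P) :
    ∏ i, pochhammerAt (α i) l ^ e i ∣ bdiff^[k] P := by
  induction k generalizing P with
  | zero => simpa using hP
  | succ k ih =>
    rw [Nat.add_right_comm] at hP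
    exact ih (prod_pochhammerAt_pow_dvd_bdiff e α hP)

end BackwardDifference

theorem bdiff_pow_mem_image_general {K : Type*} [Field K]
    (d : ℕ) (m : Fin d → ℕ) (n : ℕ)
    (α : Fin d → K) (P Q : Polynomial K)
    (hP : (∏ i, (∏ j ∈ range n, (X + C (α i) + (j : Polynomial K))) ^ (m i + 1)) ∣ P)
    (hQ : Q.degree < n) :
    ∃ R : Polynomial K,
      Q * bdiff^[n] P = bdiff ((∏ i, (X + C (α i)) ^ (m i + 1)) * R) := by
  refine exists_mul_bdiff_iterate_eq_bdiff_mul (fun k hk => ?_) hQ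
  have hPk : ∏ i, pochhammerAt (α i) (k + 1) ^ (m i + 1) ∣ P :=
    (prod_pochhammerAt_pow_dvd_of_le _ α hk).trans hP
  simpa only [pochhammerAt_one] using prod_pochhammerAt_pow_dvd_bdiff_iterate _ α hPk

/-- Let `K` be a field of characteristic `0`, `d ≥ 1`, `m_1, …, m_d, n ≥ 1`,
`α_1, …, α_d ∈ K`, and set `A(t) = Π_i (t+α_i)^{m_i+1}` and
`A_n(t) = Π_i ((t+α_i)(t+α_i+1)⋯(t+α_i+n-1))^{m_i+1}`.  If `A_n ∣ P` and
`deg Q < n`, then `Q·Δ^n(P) ∈ Δ(A·K[t])`. -/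
theorem bdiff_pow_mem_image {K : Type*} [Field K] [CharZero K]
    (d : ℕ) (hd : 1 ≤ d) (m : Fin d → ℕ) (hm : ∀ i, 1 ≤ m i) (n : ℕ) (hn : 1 ≤ n)
    (α : Fin d → K) (P Q : Polynomial K)
    (hP : (∏ i, (∏ j ∈ range n, (X + C (α i) + (j : Polynomial K))) ^ (m i + 1)) ∣ P)
    (hQ : Q.degree < n) :
    ∃ R : Polynomial K,
      Q * bdiff^[n] P = bdiff ((∏ i, (X + C (α i)) ^ (m i + 1)) * R) :=
  bdiff_pow_mem_image_general d m n α P Q hP hQ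
end

section
/- For every integer j ≥ 0, the identity ((z)_j − (t)_j)/(z − t) = (z)_j · Σ_{k=0}^{j-1} (t)_k / (z)_{k+1} holds in the field of rational functions ℚ(z,t), where (x)_j = x(x+1)⋯(x+j-1). -/
/-!
Writing `(x)_k` for the rising factorial, the ratios `(t)_k / (z)_k` telescope:
`(t)_k / (z)_k - (t)_{k+1} / (z)_{k+1} = (z - t) (t)_k / (z)_{k+1}`, because
`(z + k) - (t + k) = z - t`. Summing over `k < j` gives
`(z - t) Σ_{k<j} (t)_k / (z)_{k+1} = 1 - (t)_j / (z)_j`; multiply by `(z)_j` and divide by `z - t`.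
-/

open Finset

/-- The field of rational functions `ℚ(z,t)`. -/
abbrev RatFunc2 : Type := FractionRing (MvPolynomial (Fin 2) ℚ)

/-- The element `z` of `ℚ(z,t)`. -/
noncomputable def zvar : RatFunc2 :=
  algebraMap (MvPolynomial (Fin 2) ℚ) RatFunc2 (MvPolynomial.X 0)

/-- The element `t` of `ℚ(z,t)`. -/
noncomputable def tvar : RatFunc2 :=
  algebraMap (MvPolynomial (Fin 2) ℚ) RatFunc2 (MvPolynomial.X 1)

section RisingFactorial

variable {K : Type*} [Field K] {z : K}

theorem prod_range_add_natCast_ne_zero {n : ℕ} (hz : ∀ i < n, z + i ≠ 0) :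
    ∏ i ∈ range n, (z + i) ≠ 0 :=
  prod_ne_zero_iff.mpr fun i hi => hz i (mem_range.mp hi)

theorem div_prod_range_add_natCast_sub_succ (t : K) {k : ℕ} (hz : ∀ i < k + 1, z + i ≠ 0) :
    (∏ i ∈ range k, (t + i)) / ∏ i ∈ range k, (z + i) -
        (∏ i ∈ range (k + 1), (t + i)) / ∏ i ∈ range (k + 1), (z + i) =
      (z - t) * ((∏ i ∈ range k, (t + i)) / ∏ i ∈ range (k + 1), (z + i)) := by
  have hk : ∏ i ∈ range k, (z + i) ≠ 0 :=
    prod_range_add_natCast_ne_zero fun i hi => hz i (Nat.lt_succ_of_lt hi)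
  have hzk : z + k ≠ 0 := hz k (Nat.lt_succ_self k)
  rw [prod_range_succ, prod_range_succ]
  field_simp
  ring

theorem sub_mul_sum_div_prod_range_add_natCast (t : K) {j : ℕ} (hz : ∀ i < j, z + i ≠ 0) :
    (z - t) * ∑ k ∈ range j, (∏ i ∈ range k, (t + i)) / ∏ i ∈ range (k + 1), (z + i) =
      1 - (∏ i ∈ range j, (t + i)) / ∏ i ∈ range j, (z + i) := by
  rw [mul_sum]
  have step : ∀ k ∈ range j,
      (z - t) * ((∏ i ∈ range k, (t + i)) / ∏ i ∈ range (k + 1), (z + i)) =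
        (∏ i ∈ range k, (t + i)) / ∏ i ∈ range k, (z + i) -
          (∏ i ∈ range (k + 1), (t + i)) / ∏ i ∈ range (k + 1), (z + i) :=
    fun k hk => (div_prod_range_add_natCast_sub_succ t fun i hi =>
      hz i (lt_of_lt_of_le hi (mem_range.mp hk))).symm
  rw [sum_congr rfl step, sum_range_sub']
  simp

theorem prod_range_add_natCast_sub_div (t : K) {j : ℕ} (hzt : z ≠ t)
    (hz : ∀ i < j, z + i ≠ 0) :
    ((∏ i ∈ range j, (z + i)) - ∏ i ∈ range j, (t + i)) / (z - t) =
      (∏ i ∈ range j, (z + i)) *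
        ∑ k ∈ range j, (∏ i ∈ range k, (t + i)) / ∏ i ∈ range (k + 1), (z + i) := by
  have hj := prod_range_add_natCast_ne_zero hz
  rw [div_eq_iff (sub_ne_zero.mpr hzt), mul_right_comm, mul_assoc,
    sub_mul_sum_div_prod_range_add_natCast t hz, mul_sub, mul_one, mul_div_cancel₀ _ hj]

end RisingFactorial

theorem zvar_ne_tvar : zvar ≠ tvar := by
  rw [zvar, tvar, (IsFractionRing.injective _ RatFunc2).ne_iff]
  exact (MvPolynomial.X_injective (R := ℚ)).ne (by decide)

theorem zvar_add_natCast_ne_zero (i : ℕ) : zvar + (i : RatFunc2) ≠ 0 := by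
  rw [zvar, ← map_natCast (algebraMap (MvPolynomial (Fin 2) ℚ) RatFunc2), ← map_add,
    map_ne_zero_iff _ (IsFractionRing.injective _ RatFunc2)]
  intro h
  have h1 : (1 : ℚ) + i = 0 := by simpa using congrArg (MvPolynomial.eval fun _ => (1 : ℚ)) h
  exact (by positivity : (0 : ℚ) < 1 + i).ne' h1

/-- For every `j ≥ 0`, `((z)_j − (t)_j)/(z − t) = (z)_j · Σ_{k=0}^{j-1} (t)_k/(z)_{k+1}`
in `ℚ(z,t)`, where `(x)_j = x(x+1)⋯(x+j-1)` is the rising factorial. -/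
theorem pochhammer_diff_div (j : ℕ) :
    ((∏ i ∈ range j, (zvar + (i : RatFunc2))) - ∏ i ∈ range j, (tvar + (i : RatFunc2))) /
        (zvar - tvar) =
      (∏ i ∈ range j, (zvar + (i : RatFunc2))) *
        ∑ k ∈ range j,
          (∏ i ∈ range k, (tvar + (i : RatFunc2))) /
            (∏ i ∈ range (k + 1), (zvar + (i : RatFunc2))) :=
  prod_range_add_natCast_sub_div tvar zvar_ne_tvar fun i _ => zvar_add_natCast_ne_zero i
end

section
/- Let n ≥ 1 be an integer and α ∈ ℚ a rational number. Define μ_n(α) = den(α)^n · Π_{q prime, q | den(α)} q^{⌊n/(q-1)⌋}, where den(α) is the denominator of α. Then for every k with 0 ≤ k ≤ n, both μ_n(α)·(α)_k/k! and μ_n(α)·binom(α,k) are integers. -/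
/-!
Write `α = m / d` in lowest terms, so that `(α)_k / k! = ∏_{i<k} (m + i d) / (d^k k!)`.
The factor `d^k` is absorbed by `d^n`; the factorial is handled prime by prime.
For `p ∤ d`, modulo `p^e` the product `∏ (m + i d)` is `d^k` times a product of `k` consecutive
integers, so every power of `p` dividing `k!` divides it. For `p ∣ d`, Legendre's formula gives
`v_p(k!) ≤ k / (p - 1) ≤ n / (p - 1)`, which the second factor of `μ_n(α)` supplies.
The binomial case follows from `binom(α, k) = (-1)^k (-α)_k / k!` and `μ_n(-α) = μ_n(α)`.
-/

open Finset

/-- `μ_n(α) = den(α)^n · Π_{q prime, q ∣ den(α)} q^{⌊n/(q-1)⌋}`. -/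
def mun (n : ℕ) (α : ℚ) : ℕ :=
  α.den ^ n * ∏ q ∈ α.den.primeFactors, q ^ (n / (q - 1))

open Nat

theorem natCast_dvd_prod_range_add_mul_of_coprime {N k d : ℕ} (hN : N ∣ k !) (hNd : N.Coprime d)
    (m : ℤ) : (N : ℤ) ∣ ∏ i ∈ range k, (m + i * d) := by
  have : NeZero N := ⟨ne_zero_of_dvd_ne_zero (factorial_ne_zero k) hN⟩
  obtain ⟨c, hc⟩ : ∃ c : ℕ, (c : ZMod N) * d = m := by
    let u := ZMod.unitOfCoprime d hNd.symm
    refine ⟨((m : ZMod N) * ↑u⁻¹).val, ?_⟩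
    rw [ZMod.natCast_zmod_val, mul_assoc, ← ZMod.coe_unitOfCoprime d hNd.symm, Units.inv_mul,
      mul_one]
  rw [← ZMod.intCast_zmod_eq_zero_iff_dvd]
  push_cast
  calc ∏ i ∈ range k, ((m : ZMod N) + i * d)
      = ∏ i ∈ range k, (((c + i : ℕ) : ZMod N) * d) := by
        refine prod_congr rfl fun i _ => ?_
        rw [← hc]
        push_cast
        ring
    _ = (c.ascFactorial k : ZMod N) * (d : ZMod N) ^ k := by
        rw [ascFactorial_eq_prod_range, prod_mul_distrib, prod_const, card_range]
        push_cast
        ring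
    _ = 0 := by
        rw [(ZMod.natCast_eq_zero_iff _ _).mpr (hN.trans (factorial_dvd_ascFactorial c k)),
          zero_mul]

theorem Nat.Prime.le_div_pred_of_pow_dvd_factorial {p e k : ℕ} (hp : p.Prime)
    (h : p ^ e ∣ k !) : e ≤ k / (p - 1) :=
  ((hp.pow_dvd_iff_le_factorization (factorial_ne_zero k)).mp h).trans
    (factorization_factorial_le_div_pred hp k)

theorem factorial_dvd_prod_primeFactors_mul_prod_add_mul {n k d : ℕ} (hk : k ≤ n) (hd : d ≠ 0)
    (m : ℤ) :
    (k ! : ℤ) ∣ (∏ q ∈ d.primeFactors, q ^ (n / (q - 1)) : ℕ) * ∏ i ∈ range k, (m + i * d) := by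
  rw [Int.natCast_dvd, Int.natAbs_mul, Int.natAbs_natCast, Nat.dvd_iff_prime_pow_dvd_dvd]
  intro p e hp hpe
  by_cases hpd : p ∣ d
  · refine Dvd.dvd.mul_right ?_ _
    have hle : e ≤ n / (p - 1) :=
      (hp.le_div_pred_of_pow_dvd_factorial hpe).trans (Nat.div_le_div_right hk)
    exact (pow_dvd_pow p hle).trans
      (dvd_prod_of_mem (fun q => q ^ (n / (q - 1))) (mem_primeFactors.mpr ⟨hp, hpd, hd⟩))
  · refine Dvd.dvd.mul_left ?_ _
    rw [← Int.natCast_dvd]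
    exact natCast_dvd_prod_range_add_mul_of_coprime hpe
      (Nat.Coprime.pow_left e (hp.coprime_iff_not_dvd.mpr hpd)) m

theorem prod_range_add_natCast_eq_num_div_den (α : ℚ) (k : ℕ) :
    ∏ i ∈ range k, (α + i) = ((∏ i ∈ range k, (α.num + i * α.den) : ℤ) : ℚ) / α.den ^ k := by
  have hden : (α.den : ℚ) ≠ 0 := by exact_mod_cast α.den_ne_zero
  rw [← card_range k, ← prod_const, card_range, Int.cast_prod, ← prod_div_distrib]
  refine prod_congr rfl fun i _ => ?_
  push_cast
  rw [eq_div_iff hden, add_mul, Rat.mul_den_eq_num]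

theorem exists_mun_mul_prod_range_add_div_factorial_eq_int {n k : ℕ} (hk : k ≤ n) (α : ℚ) :
    ∃ a : ℤ, (mun n α : ℚ) * ((∏ i ∈ range k, (α + i)) / (k ! : ℚ)) = a := by
  have hdvd : ((k ! * α.den ^ k : ℕ) : ℤ) ∣
      (mun n α : ℤ) * ∏ i ∈ range k, (α.num + i * α.den) := by
    have := mul_dvd_mul (factorial_dvd_prod_primeFactors_mul_prod_add_mul hk α.den_ne_zero α.num)
      (pow_dvd_pow (α.den : ℤ) hk)
    rw [mun]
    push_cast at this ⊢
    exact this.trans (dvd_of_eq (by ring))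
  obtain ⟨a, ha⟩ := hdvd
  refine ⟨a, ?_⟩
  have ha' := congrArg (fun z : ℤ => (z : ℚ)) ha
  push_cast at ha'
  have hden : (α.den : ℚ) ≠ 0 := by exact_mod_cast α.den_ne_zero
  have hfac : (k ! : ℚ) ≠ 0 := by exact_mod_cast factorial_ne_zero k
  rw [prod_range_add_natCast_eq_num_div_den]
  push_cast
  field_simp
  linear_combination ha'

theorem mun_neg (n : ℕ) (α : ℚ) : mun n (-α) = mun n α := by
  rw [mun, mun, Rat.den_neg_eq_den]

theorem mun_mul_pochhammer_int_general (n : ℕ) (α : ℚ) (k : ℕ) (hk : k ≤ n) :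
    (∃ a : ℤ, (mun n α : ℚ) * ((∏ i ∈ range k, (α + i)) / (k.factorial : ℚ)) = a) ∧
    (∃ b : ℤ, (mun n α : ℚ) * ((∏ i ∈ range k, (α - i)) / (k.factorial : ℚ)) = b) := by
  refine ⟨exists_mun_mul_prod_range_add_div_factorial_eq_int hk α, ?_⟩
  obtain ⟨b, hb⟩ := exists_mun_mul_prod_range_add_div_factorial_eq_int hk (-α)
  have hsub : ∏ i ∈ range k, (α - i) = (-1) ^ k * ∏ i ∈ range k, (-α + i) := by
    rw [← card_range k, ← prod_const, card_range, ← prod_mul_distrib]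
    exact prod_congr rfl fun i _ => by ring
  refine ⟨(-1) ^ k * b, ?_⟩
  rw [mun_neg] at hb
  rw [hsub, mul_div_assoc, mul_left_comm, hb]
  push_cast
  ring

/-- For `n ≥ 1`, `α ∈ ℚ`, and `0 ≤ k ≤ n`, both `μ_n(α)·(α)_k/k!` and
`μ_n(α)·binom(α,k)` are integers. -/
theorem mun_mul_pochhammer_int (n : ℕ) (hn : 1 ≤ n) (α : ℚ) (k : ℕ) (hk : k ≤ n) :
    (∃ a : ℤ, (mun n α : ℚ) * ((∏ i ∈ range k, (α + i)) / (k.factorial : ℚ)) = a) ∧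
    (∃ b : ℤ, (mun n α : ℚ) * ((∏ i ∈ range k, (α - i)) / (k.factorial : ℚ)) = b) :=
  mun_mul_pochhammer_int_general n α k hk
end

section
/- Let K be a field of characteristic 0. For the formal Laurent series R_s(z) = Σ_{k≥s-2} (k−s+3)_{s-2} B_{k−s+2} (−1)^{k+1}/z^{k+1} ∈ (1/z)K[[1/z]] (where B_j is the j-th Bernoulli number and (a)_j is the Pochhammer symbol, s ≥ 2 an integer), the forward difference satisfies Δ₁(R_s)(z) := R_s(z+1) − R_s(z) = (−1)^s (s−1)!/z^s, as an identity of formal Laurent series in 1/z. -/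
open Finset

/-- The Laurent series `R_s(z) = Σ_{k≥s-2} (k-s+3)_{s-2} B_{k-s+2} (-1)^{k+1}/z^{k+1}`,
modeled as a power series in `X = 1/z` (the coefficient of `X^m`, `m = k+1`, is
`(-1)^m (m+2-s)_{s-2} B_{m+1-s}`). -/
noncomputable def Rser (K : Type*) [Field K] [CharZero K] (s : ℕ) : PowerSeries K :=
  PowerSeries.mk fun m =>
    if s - 1 ≤ m then
      (-1 : K) ^ m * (∏ i ∈ range (s - 2), ((m + 2 - s + i : ℕ) : K)) *
        algebraMap ℚ K (bernoulli (m + 1 - s))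
    else 0

/-- The substitution `z ↦ z + 1` on formal Laurent series in `1/z` supported in
`K[[1/z]]`, i.e. `X = 1/z ↦ 1/(z+1) = X(1+X)^{-1}`, computed by expanding each
`X^n(1+X)^{-n} = Σ_j (-1)^j C(n+j-1, j) X^{n+j}`. -/
noncomputable def shiftOne {K : Type*} [Field K] (f : PowerSeries K) : PowerSeries K :=
  PowerSeries.mk fun m =>
    ∑ n ∈ range (m + 1),
      (PowerSeries.coeff n f) * (-1 : K) ^ (m - n) * ((m - 1).choose (m - n) : K)

/-!
Substituting `X ↦ X/(1+X)` and comparing coefficients of `X^m`, `m = s - 1 + N`, every term of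
`R_s(z+1) - R_s(z)` carries the same weight `(-1)^m (s-2+N)!/N!` times `C(N,j) B_j`, so the
coefficient is `(-1)^m (s-2+N)!/N! · Σ_{j<N} C(N,j) B_j`. The Bernoulli recurrence makes this
sum `[N = 1]`, leaving only `X^s` with coefficient `(-1)^s (s-1)!`.
-/

open scoped Nat

theorem Nat.ascFactorial_mul_choose_mul_factorial (t : ℕ) {j N : ℕ} (h : j ≤ N) :
    (j + 1).ascFactorial t * (t + N).choose (N - j) * N ! = (t + N)! * N.choose j := by
  obtain ⟨b, rfl⟩ := Nat.exists_eq_add_of_le h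
  rw [Nat.add_sub_cancel_left]
  apply Nat.eq_of_mul_eq_mul_right (Nat.mul_pos j.factorial_pos b.factorial_pos)
  calc (j + 1).ascFactorial t * (t + (j + b)).choose b * (j + b)! * (j ! * b !)
      = (t + (j + b)).choose b * (j ! * (j + 1).ascFactorial t) * b ! * (j + b)! := by ring
    _ = (t + (j + b))! * (j + b)! := by
      rw [Nat.factorial_mul_ascFactorial, show t + (j + b) = j + t + b by ring,
        Nat.add_choose_mul_factorial_mul_factorial]
    _ = (t + (j + b))! * ((j + b).choose b * j ! * b !) := by
      rw [Nat.add_choose_mul_factorial_mul_factorial]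
    _ = (t + (j + b))! * (j + b).choose j * (j ! * b !) := by
      rw [Nat.choose_symm_add]; ring

section

variable {K : Type*} [Field K]

theorem coeff_shiftOne_sub_self (f : PowerSeries K) (m : ℕ) :
    PowerSeries.coeff m (shiftOne f - f) =
      ∑ n ∈ range m,
        PowerSeries.coeff n f * (-1 : K) ^ (m - n) * ((m - 1).choose (m - n) : K) := by
  simp [shiftOne, sum_range_succ]

variable [CharZero K]

theorem coeff_Rser_of_lt {s n : ℕ} (h : n < s - 1) : PowerSeries.coeff n (Rser K s) = 0 := by
  simp only [Rser, PowerSeries.coeff_mk, if_neg (not_le.2 h)]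

theorem coeff_Rser_add {s : ℕ} (hs : 1 ≤ s) (j : ℕ) :
    PowerSeries.coeff (s - 1 + j) (Rser K s) =
      (-1 : K) ^ (s - 1 + j) * ((j + 1).ascFactorial (s - 2) : K) *
        algebraMap ℚ K (bernoulli j) := by
  simp only [Rser, PowerSeries.coeff_mk, if_pos (Nat.le_add_right _ _),
    Nat.ascFactorial_eq_prod_range, Nat.cast_prod]
  congr 3
  · ext i; congr 2; omega
  · omega

theorem coeff_shiftOne_Rser_sub {s : ℕ} (hs : 2 ≤ s) (N : ℕ) :
    PowerSeries.coeff (s - 1 + N) (shiftOne (Rser K s) - Rser K s) =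
      (-1 : K) ^ (s - 1 + N) * (((s - 2 + N)! : K) / N !) *
        ∑ j ∈ range N, (N.choose j : K) * algebraMap ℚ K (bernoulli j) := by
  rw [coeff_shiftOne_sub_self, show s - 1 + N - 1 = s - 2 + N by omega, sum_range_add,
    sum_eq_zero fun n hn => by rw [coeff_Rser_of_lt (mem_range.1 hn)]; ring, zero_add, mul_sum]
  refine sum_congr rfl fun j hj => ?_
  have hjN : j < N := mem_range.1 hj
  rw [coeff_Rser_add (by omega), show s - 1 + N - (s - 1 + j) = N - j by omega]
  have hsign : (-1 : K) ^ (s - 1 + j) * (-1) ^ (N - j) = (-1) ^ (s - 1 + N) := by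
    rw [← pow_add]; congr 1; omega
  have hweight : ((s - 2 + N)! : K) / N ! * N.choose j =
      (j + 1).ascFactorial (s - 2) * (s - 2 + N).choose (N - j) := by
    have hcount := congrArg (Nat.cast : ℕ → K)
      (Nat.ascFactorial_mul_choose_mul_factorial (s - 2) hjN.le)
    push_cast at hcount
    rw [div_mul_eq_mul_div, div_eq_iff (Nat.cast_ne_zero.2 N.factorial_ne_zero), ← hcount]
  rw [← hsign]
  linear_combination
    -(-1 : K) ^ (s - 1 + j) * (-1) ^ (N - j) * algebraMap ℚ K (bernoulli j) * hweight

end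

/-- For `s ≥ 2`, the forward difference of `R_s` satisfies
`R_s(z+1) - R_s(z) = (-1)^s (s-1)! / z^s` as formal Laurent series in `1/z`. -/
theorem bdiff_Rser {K : Type*} [Field K] [CharZero K] (s : ℕ) (hs : 2 ≤ s) :
    shiftOne (Rser K s) - Rser K s =
      PowerSeries.C ((-1 : K) ^ s * ((s - 1).factorial : K)) * PowerSeries.X ^ s := by
  ext m
  rw [PowerSeries.coeff_C_mul, PowerSeries.coeff_X_pow]
  rcases lt_or_ge m (s - 1) with hm | hm
  · rw [coeff_shiftOne_sub_self, if_neg (by omega), mul_zero]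
    exact sum_eq_zero fun n hn => by
      rw [coeff_Rser_of_lt ((mem_range.1 hn).trans hm)]; ring
  obtain ⟨N, rfl⟩ := Nat.exists_eq_add_of_le hm
  have hbernoulli : ∑ j ∈ range N, (N.choose j : K) * algebraMap ℚ K (bernoulli j) =
      if N = 1 then 1 else 0 := by
    simpa only [map_sum, map_mul, map_natCast, apply_ite, map_one, map_zero] using
      congrArg (algebraMap ℚ K) (sum_bernoulli N)
  rw [coeff_shiftOne_Rser_sub hs, hbernoulli]
  by_cases hN : N = 1
  · subst hN
    rw [if_pos rfl, if_pos (by omega), show s - 1 + 1 = s by omega, show s - 2 + 1 = s - 1 by omega]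
    simp
  · rw [if_neg hN, if_neg (by omega), mul_zero, mul_zero]
end

section
/- Let K be a field of characteristic 0. For f(z) = Σ_{k≥0} f_k/z^{k+1} ∈ (1/z)K[[1/z]] define the K-linear form φ_f : K[t] → K by φ_f(t^k) = f_k. Suppose f(z) = Σ_{k≥0} a_k·k!/((z)(z+1)⋯(z+k)) (expanded as a Laurent series in 1/z). Then for every j ≥ 0, φ_f((t)_j/j!) = a_j, where (t)_j = t(t+1)⋯(t+j-1). -/
/-!
Writing `∇ g (x) = g x - g (x - 1)` for the backward difference, the hypothesis says
`f_m = Σ_{k ≤ m} a_k · (∇^k t^m)(0)`. Since `∇^k` kills polynomials of degree `< k`, the sum may be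
extended to `k ≤ j` whenever `m ≤ j`, so on polynomials of degree `≤ j` the form `φ_f` agrees with
`P ↦ Σ_{k ≤ j} a_k · (∇^k P)(0)`. Finally `(t)_j` vanishes at `0, -1, …, -(j - 1)` and equals
`(-1)^j j!` at `-j`, so `(∇^k (t)_j)(0) = j!` if `k = j` and `0` otherwise.
-/

open Polynomial Finset

section BackwardDifference

variable {R : Type*} [CommRing R]

/-- `P ↦ (∇^k P)(0)`, where `∇ g (x) = g x - g (x - 1)`. -/
noncomputable def bwdDiffIterAtZero (k : ℕ) : R[X] →ₗ[R] R :=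
  ∑ i ∈ range (k + 1), ((-1) ^ i * (k.choose i : R)) • leval (-(i : R))

theorem bwdDiffIterAtZero_apply (k : ℕ) (P : R[X]) :
    bwdDiffIterAtZero k P =
      ∑ i ∈ range (k + 1), (-1) ^ i * (k.choose i : R) * P.eval (-(i : R)) := by
  simp [bwdDiffIterAtZero, leval]

theorem bwdDiffIterAtZero_eq_zero_of_natDegree_lt {k : ℕ} {P : R[X]} (hP : P.natDegree < k) :
    bwdDiffIterAtZero k P = 0 := by
  -- `(∇^k P)(0) = (-1)^k (Δ^k Q)(0)` for the reflected polynomial `Q(x) = P(-x)`.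
  set Q := P.comp (-X)
  have hQ : Q.natDegree < k := by
    refine (natDegree_comp_le.trans ?_).trans_lt hP
    simpa using mul_le_of_le_one_right (Nat.zero_le _) natDegree_X_le
  have h := fwdDiff_iter_eq_sum_shift 1 Q.eval k 0
  rw [fwdDiff_iter_eq_zero_of_degree_lt hQ] at h
  have hsign : ∀ i ∈ range (k + 1), ((-1 : ℤ) ^ (k - i) * k.choose i) • Q.eval (0 + i • 1)
      = (-1) ^ k * ((-1) ^ i * (k.choose i : R) * P.eval (-(i : R))) := by
    intro i hi
    have hk : (-1 : R) ^ k = (-1) ^ (k - i) * (-1) ^ i := by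
      rw [← pow_add, Nat.sub_add_cancel (mem_range_succ_iff.mp hi)]
    have hi2 : (-1 : R) ^ i * (-1) ^ i = 1 := by rw [← mul_pow]; norm_num
    simp only [Q, zsmul_eq_mul, Int.cast_mul, Int.cast_pow, Int.cast_neg, Int.cast_one,
      Int.cast_natCast, nsmul_one, zero_add, eval_comp, eval_neg, eval_X, hk]
    linear_combination -(-1 : R) ^ (k - i) * (k.choose i) * P.eval (-(i : R)) * hi2
  rw [sum_congr rfl hsign, ← mul_sum, Pi.zero_apply] at h
  rw [bwdDiffIterAtZero_apply]
  exact ((isUnit_neg_one (α := R)).pow k).mul_right_eq_zero.mp h.symm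

theorem bwdDiffIterAtZero_ascPochhammer [IsDomain R] (k j : ℕ) :
    bwdDiffIterAtZero k (ascPochhammer R j) = if k = j then (j.factorial : R) else 0 := by
  rcases lt_trichotomy k j with hkj | rfl | hjk
  · rw [if_neg hkj.ne, bwdDiffIterAtZero_apply]
    refine sum_eq_zero fun i hi => ?_
    rw [ascPochhammer_eval_neg_coe_nat_of_lt ((mem_range_succ_iff.mp hi).trans_lt hkj), mul_zero]
  · rw [if_pos rfl, bwdDiffIterAtZero_apply, sum_range_succ, sum_eq_zero fun i hi => by
      rw [ascPochhammer_eval_neg_coe_nat_of_lt (mem_range.mp hi), mul_zero],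
      ascPochhammer_eval_neg_eq_descPochhammer, descPochhammer_eval_eq_descFactorial,
      Nat.descFactorial_self, Nat.choose_self, Nat.cast_one, zero_add, mul_one, ← mul_assoc,
      ← mul_pow]
    norm_num
  · rw [if_neg hjk.ne',
      bwdDiffIterAtZero_eq_zero_of_natDegree_lt (by rwa [ascPochhammer_natDegree])]

end BackwardDifference

theorem prod_range_X_add_natCast_eq_ascPochhammer {R : Type*} [CommSemiring R] (j : ℕ) :
    ∏ i ∈ range j, (X + C (i : R)) = ascPochhammer R j := by
  induction j with
  | zero => simp
  | succ j ih => rw [prod_range_succ, ih, ascPochhammer_succ_right, map_natCast]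

theorem sum_coeff_mul_eq_of_eq_on_monomials {R : Type*} [CommSemiring R] (L : R[X] →ₗ[R] R)
    {f : ℕ → R} {N : ℕ} (hf : ∀ m ≤ N, f m = L (X ^ m)) {P : R[X]} (hP : P.natDegree ≤ N) :
    P.sum (fun m c => c * f m) = L P := by
  have hPN : P.natDegree < N + 1 := Nat.lt_succ_of_le hP
  conv_rhs => rw [P.as_sum_range' (N + 1) hPN]
  rw [sum_over_range' P (f := fun m c => c * f m) (fun _ => zero_mul _) (N + 1) hPN, map_sum]
  refine sum_congr rfl fun m hm => ?_
  rw [hf m (Nat.lt_succ_iff.mp (mem_range.mp hm)), ← smul_X_eq_monomial, map_smul, smul_eq_mul]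

/-- Let `K` be a field of characteristic `0`.  Encode `f(z) = Σ_{m≥0} f_m/z^{m+1}` by
its coefficient function `fc : ℕ → K`, and let `φ_f : K[t] → K` be the linear form
with `φ_f(t^m) = f_m`, i.e. `φ_f(P) = Σ_m (coeff of t^m in P) · f_m`.  Suppose
`f(z) = Σ_{k≥0} a_k·k!/(z(z+1)⋯(z+k))`, which coefficientwise means
`f_m = Σ_{k≤m} a_k · Σ_{i=0}^k (-1)^i C(k,i) (-i)^m` (using the expansion
`k!/(z(z+1)⋯(z+k)) = Σ_{i=0}^k (-1)^i C(k,i)/(z+i)` and `1/(z+i) = Σ_m (-i)^m/z^{m+1}`).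
Then for every `j ≥ 0`, `φ_f((t)_j/j!) = a_j`. -/
theorem phi_f_pochhammer {K : Type*} [Field K] [CharZero K] (fc a : ℕ → K)
    (h : ∀ m : ℕ, fc m =
        ∑ k ∈ range (m + 1), a k *
          ∑ i ∈ range (k + 1), (-1 : K) ^ i * (k.choose i : K) * (-(i : K)) ^ m) :
    ∀ j : ℕ,
      ((∏ i ∈ range j, (X + C (i : K))) * C ((j.factorial : K))⁻¹).sum
          (fun m c => c * fc m) = a j := by
  intro j
  set L : K[X] →ₗ[K] K := ∑ k ∈ range (j + 1), a k • bwdDiffIterAtZero k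
  have hL : ∀ P, L P = ∑ k ∈ range (j + 1), a k * bwdDiffIterAtZero k P := fun P => by simp [L]
  have hfc : ∀ m ≤ j, fc m = L (X ^ m) := by
    intro m hm
    rw [hL, ← sum_subset (range_subset_range.mpr (by omega : m + 1 ≤ j + 1)), h m]
    · simp [bwdDiffIterAtZero_apply]
    · intro k _ hk
      rw [bwdDiffIterAtZero_eq_zero_of_natDegree_lt (by simpa using hk), mul_zero]
  have hdeg : (ascPochhammer K j * C ((j.factorial : K))⁻¹).natDegree ≤ j :=
    (natDegree_mul_C_le _ _).trans (ascPochhammer_natDegree K j).le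
  rw [prod_range_X_add_natCast_eq_ascPochhammer, sum_coeff_mul_eq_of_eq_on_monomials L hfc hdeg, hL]
  simp_rw [mul_comm _ (C _), ← smul_eq_C_mul, map_smul, bwdDiffIterAtZero_ascPochhammer]
  simp [Nat.factorial_ne_zero]
end

section
/- Let K be a field of characteristic 0, m ≥ 0 an integer, and let Δ : K[t] → K[t] be given by Δ(P)(t) = P(t−1) − P(t). For s ≥ 2 set ker φ_s := Δ(span_K{t, t^2, …, t^{s-2}, t^s, t^{s+1}, …}). Then the intersection ∩_{s=2}^{m+1} ker φ_s equals Δ(t^{m+1}·K[t]), with the convention that the intersection over an empty range is K[t] when m = 0. -/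
open Polynomial

section Aux
variable {K : Type*} [Field K]

lemma bdiff_add (P Q : Polynomial K) : bdiff (P + Q) = bdiff P + bdiff Q := by
  simp [bdiff, add_comp]; ring

lemma bdiff_smul (a : K) (P : Polynomial K) : bdiff (a • P) = a • bdiff P := by
  simp [bdiff, smul_comp, smul_sub]

lemma coeff_bdiff_X_pow (i n : ℕ) (h : i ≤ n + 1) :
    (bdiff ((X : Polynomial K) ^ i)).coeff n = if i = n + 1 then -((n+1 : ℕ) : K) else 0 := by
  have hx : (X - 1 : Polynomial K) = X + C (-1) := by simp [sub_eq_add_neg]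
  simp only [bdiff, X_pow_comp, hx, coeff_sub, coeff_X_add_C_pow, coeff_X_pow]
  rcases eq_or_lt_of_le h with h1 | h1
  · subst h1
    simp [Nat.succ_sub_one]
  · have hin : i ≤ n := by omega
    rcases eq_or_lt_of_le hin with h2 | h2
    · subst h2
      simp [if_neg (by omega : ¬ i = i + 1)]
    · simp [Nat.choose_eq_zero_of_lt h2, if_neg (by omega : ¬ n = i), if_neg (by omega : ¬ i = n+1)]

lemma bdiff_sum {ι : Type*} (s : Finset ι) (f : ι → Polynomial K) :
    bdiff (∑ i ∈ s, f i) = ∑ i ∈ s, bdiff (f i) := by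
  classical
  induction s using Finset.induction with
  | empty => simp [bdiff]
  | insert a s h ih => simp [Finset.sum_insert h, bdiff_add, ih]

lemma coeff_bdiff (P : Polynomial K) (n : ℕ) (h : P.natDegree ≤ n + 1) :
    (bdiff P).coeff n = -((n+1 : ℕ) : K) * P.coeff (n + 1) := by
  have hrep := P.as_sum_range' (n + 2) (by omega)
  have : bdiff P = ∑ i ∈ Finset.range (n + 2), bdiff (monomial i (P.coeff i)) := by
    rw [← bdiff_sum]; exact congrArg bdiff hrep
  rw [this, finset_sum_coeff]
  have hmono : ∀ i ∈ Finset.range (n + 2),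
      (bdiff (monomial i (P.coeff i))).coeff n
        = if i = n + 1 then -((n+1 : ℕ) : K) * P.coeff (n+1) else 0 := by
    intro i hi
    rw [Finset.mem_range] at hi
    have : (monomial i (P.coeff i) : Polynomial K) = (P.coeff i) • X ^ i := by
      rw [smul_eq_C_mul, C_mul_X_pow_eq_monomial]
    rw [this, bdiff_smul, coeff_smul, coeff_bdiff_X_pow i n (by omega)]
    split_ifs with hcase
    · subst hcase; rw [smul_eq_mul]; ring
    · simp
  rw [Finset.sum_congr rfl hmono, Finset.sum_ite_eq' (Finset.range (n+2)) (n+1)]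
  simp

lemma coeff_bdiff_eq_zero (P : Polynomial K) (n : ℕ) (h : P.natDegree ≤ n) :
    (bdiff P).coeff n = 0 := by
  rw [coeff_bdiff P n (by omega), coeff_eq_zero_of_natDegree_lt (by omega), mul_zero]

lemma bdiff_eq_zero_unique [CharZero K] (P : Polynomial K)
    (h0 : P.coeff 0 = 0) (hb : bdiff P = 0) : P = 0 := by
  by_contra hP
  rcases Nat.eq_zero_or_pos P.natDegree with hd | hd
  · apply hP
    rw [eq_C_of_natDegree_eq_zero hd, h0, map_zero]
  · obtain ⟨n, hn⟩ : ∃ n, P.natDegree = n + 1 := ⟨P.natDegree - 1, by omega⟩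
    have := coeff_bdiff P n (by omega)
    rw [hb, coeff_zero] at this
    have hlc : P.coeff (n + 1) ≠ 0 := by
      rw [← hn]; exact leadingCoeff_ne_zero.mpr hP
    have hne : -((n+1 : ℕ) : K) * P.coeff (n+1) ≠ 0 :=
      mul_ne_zero (neg_ne_zero.mpr (Nat.cast_ne_zero.mpr (by omega))) hlc
    exact hne this.symm

lemma bdiff_injective [CharZero K] (P Q : Polynomial K) (hP : P.coeff 0 = 0)
    (hQ : Q.coeff 0 = 0) (h : bdiff P = bdiff Q) : P = Q := by
  have : P - Q = 0 := by
    apply bdiff_eq_zero_unique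
    · simp [hP, hQ]
    · simp [bdiff, sub_comp] at h ⊢
      rw [sub_sub_sub_comm]
      rw [sub_eq_zero]
      linear_combination h
  exact sub_eq_zero.mp this

lemma bdiff_exists_aux [CharZero K] (d : ℕ) : ∀ Q : Polynomial K, Q.natDegree ≤ d →
    ∃ P : Polynomial K, P.coeff 0 = 0 ∧ bdiff P = Q := by
  induction d with
  | zero =>
    intro Q hQ
    refine ⟨C (-(Q.coeff 0)) * X, by simp, ?_⟩
    have : Q = C (Q.coeff 0) := eq_C_of_natDegree_eq_zero (Nat.le_zero.mp hQ)
    rw [this]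
    simp [bdiff, mul_comp, sub_comp]
    ring
  | succ d ih =>
    intro Q hQ
    set c : K := Q.coeff (d + 1) with hc
    set P₀ : Polynomial K := C (-c / ((d + 2 : ℕ) : K)) * X ^ (d + 2) with hP₀
    have hP₀deg : P₀.natDegree ≤ d + 2 := by
      apply le_trans (natDegree_C_mul_le _ _)
      simp
    have hcoeffd1 : (bdiff P₀).coeff (d + 1) = c := by
      rw [coeff_bdiff P₀ (d+1) hP₀deg]
      have : P₀.coeff (d + 2) = -c / ((d + 2 : ℕ) : K) := by
        rw [hP₀, coeff_C_mul, coeff_X_pow, if_pos rfl, mul_one]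
      rw [this]
      have h2 : ((d + 2 : ℕ) : K) ≠ 0 := Nat.cast_ne_zero.mpr (by omega)
      push_cast at h2 ⊢
      field_simp
      ring
    have hQ' : (Q - bdiff P₀).natDegree ≤ d := by
      apply natDegree_le_iff_coeff_eq_zero.mpr
      intro k hk
      rw [coeff_sub]
      rcases eq_or_lt_of_le (Nat.succ_le_of_lt hk) with h1 | h1
      · subst h1
        rw [hcoeffd1, ← hc, sub_self]
      · rw [coeff_eq_zero_of_natDegree_lt (by omega),
          coeff_bdiff_eq_zero P₀ k (by omega), sub_self]
    obtain ⟨P₁, hP₁0, hP₁⟩ := ih (Q - bdiff P₀) hQ'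
    refine ⟨P₀ + P₁, ?_, ?_⟩
    · simp [hP₀, hP₁0, coeff_X_pow]
    · rw [bdiff_add, hP₁]; ring

lemma bdiff_exists [CharZero K] (Q : Polynomial K) :
    ∃ P : Polynomial K, P.coeff 0 = 0 ∧ bdiff P = Q :=
  bdiff_exists_aux Q.natDegree Q le_rfl

lemma coeff_eq_zero_of_mem_span (S : Set ℕ) (k : ℕ) (hk : k ∉ S) (p : Polynomial K)
    (hp : p ∈ Submodule.span K ((fun j : ℕ => (X : Polynomial K) ^ j) '' S)) :
    p.coeff k = 0 := by
  induction hp using Submodule.span_induction with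
  | mem x hx =>
    obtain ⟨j, hj, rfl⟩ := hx
    rw [coeff_X_pow, if_neg (by rintro rfl; exact hk hj)]
  | zero => simp
  | add x y _ _ hx hy => rw [coeff_add, hx, hy, add_zero]
  | smul a x _ hx => rw [coeff_smul, hx, smul_zero]

lemma mem_span_of_coeff (S : Set ℕ) (p : Polynomial K)
    (hp : ∀ k, p.coeff k ≠ 0 → k ∈ S) :
    p ∈ Submodule.span K ((fun j : ℕ => (X : Polynomial K) ^ j) '' S) := by
  rw [← p.sum_monomial_eq]
  apply Submodule.sum_mem
  intro k hk
  show (monomial k (p.coeff k) : Polynomial K) ∈ _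
  rw [show (monomial k (p.coeff k) : Polynomial K) = (p.coeff k) • X ^ k by
    rw [smul_eq_C_mul, C_mul_X_pow_eq_monomial]]
  exact Submodule.smul_mem _ _ (Submodule.subset_span ⟨k, hp k (mem_support_iff.mp hk), rfl⟩)

end Aux

/-- For a field `K` of characteristic `0` and `m ≥ 0`:
`∩_{s=2}^{m+1} Δ(span_K{t^j : j ≥ 1, j ≠ s-1}) = Δ(t^{m+1}·K[t])`
(for `m = 0` the empty intersection is all of `K[t]`). -/
theorem ker_intersection_eq {K : Type*} [Field K] [CharZero K] (m : ℕ) :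
    (⋂ s ∈ Set.Icc 2 (m + 1),
        bdiff '' (Submodule.span K
          ((fun j : ℕ => (X : Polynomial K) ^ j) '' {j | 1 ≤ j ∧ j ≠ s - 1}) : Set (Polynomial K))) =
      bdiff '' (Ideal.span {(X : Polynomial K) ^ (m + 1)} : Set (Polynomial K)) := by
  ext Q
  simp only [Set.mem_iInter, Set.mem_image, SetLike.mem_coe]
  constructor
  · intro h
    obtain ⟨P, hP0, hPQ⟩ := bdiff_exists (K := K) Q
    refine ⟨P, ?_, hPQ⟩
    rw [Ideal.mem_span_singleton]
    rw [X_pow_dvd_iff]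
    intro k hk
    rcases Nat.eq_zero_or_pos k with rfl | hk1
    · exact hP0
    · obtain ⟨P', hP'span, hP'Q⟩ := h (k + 1) (Set.mem_Icc.mpr ⟨by omega, by omega⟩)
      have h0' : P'.coeff 0 = 0 :=
        coeff_eq_zero_of_mem_span _ 0 (by simp) P' hP'span
      have hk' : P'.coeff k = 0 := by
        apply coeff_eq_zero_of_mem_span _ k _ P' hP'span
        intro hmem
        exact hmem.2 (by omega)
      have : P' = P := bdiff_injective P' P h0' hP0 (by rw [hP'Q, hPQ])
      rw [← this]; exact hk'
  · rintro ⟨P, hPmem, hPQ⟩ s hs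
    rw [Ideal.mem_span_singleton, X_pow_dvd_iff] at hPmem
    rw [Set.mem_Icc] at hs
    refine ⟨P, ?_, hPQ⟩
    apply mem_span_of_coeff
    intro k hk
    have : ¬ k < m + 1 := fun hlt => hk (hPmem k hlt)
    exact ⟨by omega, by omega⟩
end

section
/- Let K be a field of characteristic 0, m ≥ 0 an integer, N ≥ 0, and r_0 ≥ r_1 ≥ ⋯ ≥ r_N ≥ 0 integers with r_0 ≤ m+1. Set B(t) = Π_{i=0}^N (t+i)^{r_i}. Let Δ(P)(t) = P(t−1) − P(t). If Q(t), R(t) ∈ K[t] satisfy Q(t)·B(t) = Δ(t^{m+1}·R(t)), then B(t+1) divides R(t). Consequently, B(t)·K[t] ∩ Δ(t^{m+1}·K[t]) = Δ(t^{m+1}·B(t+1)·K[t]). -/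
open Polynomial Finset

/-! From `p(t-1) = p(t) + Δp(t)`: if `(t+a)^n` divides both `p` and `Δp`, then it divides
`p(t-1)`, i.e. `(t+a+1)^n` divides `p`. Take `p = t^{m+1} R` with `B ∣ Δp`. Starting from
`t^{r_0} ∣ t^{m+1}` and using `r_{i+1} ≤ r_i` to pass from `(t+i+1)^{r_i}` to `(t+i+1)^{r_{i+1}}`,
induction gives `(t+i+1)^{r_i} ∣ t^{m+1} R` for every `i ≤ N`. These factors are pairwise coprime
and coprime to `t`, so their product `B(t+1)` divides `R`. The same monotonicity gives
`B ∣ t^{m+1} B(t+1)`, hence `B ∣ Δ(t^{m+1} B(t+1) c)`, which is the reverse inclusion. -/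

/-- The polynomial `B(t)`. -/
noncomputable def bfactor (K : Type*) [CommSemiring K] (N : ℕ) (r : ℕ → ℕ) : K[X] :=
  ∏ i ∈ range (N + 1), (X + C (i : K)) ^ r i

section CommRing

variable {R : Type*} [CommRing R]

theorem comp_X_sub_one_comp_X_add_one (p : R[X]) : (p.comp (X - 1)).comp (X + 1) = p := by
  simp [comp_assoc, sub_comp]

theorem comp_X_add_one_comp_X_sub_one (p : R[X]) : (p.comp (X + 1)).comp (X - 1) = p := by
  simp [comp_assoc, add_comp]

theorem X_add_C_comp_X_add_one (a : R) : (X + C a).comp (X + 1) = X + C (a + 1) := by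
  simp only [add_comp, X_comp, C_comp, C_add, C_1]
  ring

end CommRing

section Field

variable {K : Type*} [Field K]

theorem isCoprime_X_add_C_of_ne {a b : K} (h : a ≠ b) : IsCoprime (X + C a) (X + C b) := by
  simpa only [C_neg, sub_neg_eq_add] using
    isCoprime_X_sub_C_of_isUnit_sub (sub_ne_zero.mpr (neg_injective.ne h)).isUnit

theorem prod_X_add_C_pow_dvd {ι : Type*} {s : Finset ι} {a : ι → K} (ha : Set.InjOn a s)
    {n : ι → ℕ} {p : K[X]} (h : ∀ i ∈ s, (X + C (a i)) ^ n i ∣ p) :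
    ∏ i ∈ s, (X + C (a i)) ^ n i ∣ p :=
  prod_dvd_of_coprime
    (fun _ hi _ hj hij => (isCoprime_X_add_C_of_ne (ha.ne hi hj hij)).pow) h

theorem comp_X_add_one_dvd_of_dvd_of_dvd_bdiff {d p : K[X]} (hp : d ∣ p) (hΔ : d ∣ bdiff p) :
    d.comp (X + 1) ∣ p := by
  have hshift : d ∣ p.comp (X - 1) := by
    simpa [bdiff] using dvd_add hΔ hp
  have := map_dvd (compRingHom (X + 1)) hshift
  rwa [coe_compRingHom_apply, coe_compRingHom_apply, comp_X_sub_one_comp_X_add_one] at this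

theorem dvd_bdiff_mul_comp_X_add_one {B p : K[X]} (hB : B ∣ p * B.comp (X + 1)) (c : K[X]) :
    B ∣ bdiff (p * B.comp (X + 1) * c) := by
  have hshift : B ∣ (p * B.comp (X + 1) * c).comp (X - 1) := by
    rw [mul_comp, mul_comp, comp_X_add_one_comp_X_sub_one]
    exact (dvd_mul_left B _).mul_right _
  exact dvd_sub hshift (hB.mul_right c)

end Field

section bfactor

variable {K : Type*} [Field K] {N : ℕ} {r : ℕ → ℕ}

theorem bfactor_comp_X_add_one :
    (bfactor K N r).comp (X + 1) = ∏ i ∈ range (N + 1), (X + C ((i : K) + 1)) ^ r i := by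
  rw [bfactor, Polynomial.prod_comp]
  exact prod_congr rfl fun i _ => by rw [pow_comp, X_add_C_comp_X_add_one]

theorem X_add_C_pow_dvd_bfactor {i : ℕ} (hi : i ≤ N) : (X + C (i : K)) ^ r i ∣ bfactor K N r :=
  dvd_prod_of_mem _ (mem_range.mpr (Nat.lt_succ_of_le hi))

theorem X_add_C_add_one_pow_dvd_of_bfactor_dvd_bdiff {p : K[X]}
    (hanti : ∀ i < N, r (i + 1) ≤ r i) (h0 : X ^ r 0 ∣ p) (hΔ : bfactor K N r ∣ bdiff p)
    {i : ℕ} (hi : i ≤ N) : (X + C ((i : K) + 1)) ^ r i ∣ p := by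
  have hstep : ∀ i ≤ N, (X + C (i : K)) ^ r i ∣ p → (X + C ((i : K) + 1)) ^ r i ∣ p :=
    fun i hi h => by
      simpa only [pow_comp, X_add_C_comp_X_add_one] using
        comp_X_add_one_dvd_of_dvd_of_dvd_bdiff h ((X_add_C_pow_dvd_bfactor hi).trans hΔ)
  induction i with
  | zero => exact hstep 0 hi (by simpa using h0)
  | succ i ih =>
    refine hstep (i + 1) hi ?_
    push_cast
    exact (pow_dvd_pow _ (hanti i hi)).trans (ih (by omega))

theorem bfactor_comp_X_add_one_dvd_of_dvd_bdiff [CharZero K] {m : ℕ}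
    (hanti : ∀ i < N, r (i + 1) ≤ r i) (hr0 : r 0 ≤ m + 1) {R : K[X]}
    (h : bfactor K N r ∣ bdiff (X ^ (m + 1) * R)) : (bfactor K N r).comp (X + 1) ∣ R := by
  rw [bfactor_comp_X_add_one]
  have hcop : IsCoprime (∏ i ∈ range (N + 1), (X + C ((i : K) + 1)) ^ r i) (X ^ (m + 1)) := by
    refine IsCoprime.prod_left fun i _ => IsCoprime.pow ?_
    have := isCoprime_X_add_C_of_ne (b := 0) (Nat.cast_add_one_ne_zero (R := K) i)
    rwa [C_0, add_zero] at this
  refine hcop.dvd_of_dvd_mul_left (prod_X_add_C_pow_dvd ?_ fun i hi => ?_)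
  · exact fun i _ j _ hij => Nat.cast_injective (add_right_cancel hij)
  · have h0 : (X : K[X]) ^ r 0 ∣ X ^ (m + 1) * R := dvd_mul_of_dvd_left (pow_dvd_pow X hr0) R
    have hi' : i ≤ N := Nat.lt_succ_iff.mp (mem_range.mp hi)
    exact X_add_C_add_one_pow_dvd_of_bfactor_dvd_bdiff hanti h0 h hi'

theorem bfactor_dvd_X_pow_mul_bfactor_comp_X_add_one [CharZero K] {m : ℕ}
    (hanti : ∀ i < N, r (i + 1) ≤ r i) (hr0 : r 0 ≤ m + 1) :
    bfactor K N r ∣ X ^ (m + 1) * (bfactor K N r).comp (X + 1) := by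
  refine prod_X_add_C_pow_dvd Nat.cast_injective.injOn fun i hi => ?_
  rcases i with _ | j
  · have h0 : (X : K[X]) ^ r 0 ∣ X ^ (m + 1) * (bfactor K N r).comp (X + 1) :=
      dvd_mul_of_dvd_left (pow_dvd_pow X hr0) _
    simpa using h0
  · have hj : j < N := by rw [mem_range] at hi; omega
    have hshift : (X + C ((j : K) + 1)) ^ r j ∣ (bfactor K N r).comp (X + 1) := by
      rw [bfactor_comp_X_add_one]
      exact dvd_prod_of_mem (fun i : ℕ => (X + C ((i : K) + 1)) ^ r i)
        (mem_range.mpr (by omega))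
    push_cast
    exact (pow_dvd_pow _ (hanti j hj)).trans (hshift.trans (dvd_mul_left _ _))

end bfactor

theorem span_inter_image_bdiff_eq {K : Type*} [Field K] {B D E : K[X]}
    (hdvd : ∀ R, B ∣ bdiff (D * R) → E ∣ R) (hB : ∀ c, B ∣ bdiff (D * E * c)) :
    (Ideal.span {B} : Set K[X]) ∩ bdiff '' (Ideal.span {D} : Set K[X]) =
      bdiff '' (Ideal.span {D * E} : Set K[X]) := by
  ext x
  simp only [Set.mem_inter_iff, Set.mem_image, SetLike.mem_coe, Ideal.mem_span_singleton]
  constructor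
  · rintro ⟨hx, _, ⟨R, rfl⟩, rfl⟩
    obtain ⟨c, rfl⟩ := hdvd R hx
    exact ⟨D * E * c, dvd_mul_right _ _, by rw [mul_assoc]⟩
  · rintro ⟨_, ⟨c, rfl⟩, rfl⟩
    exact ⟨hB c, D * (E * c), dvd_mul_right _ _, by rw [mul_assoc]⟩

/-- Let `K` be a field of characteristic `0`, `m, N ≥ 0`, and
`m+1 ≥ r_0 ≥ r_1 ≥ ⋯ ≥ r_N ≥ 0`.  Set `B(t) = Π_{i=0}^N (t+i)^{r_i}`.  If
`Q·B = Δ(t^{m+1}·R)` then `B(t+1) ∣ R`; consequently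
`B·K[t] ∩ Δ(t^{m+1}·K[t]) = Δ(t^{m+1}·B(t+1)·K[t])`. -/
theorem bfactor_divides_and_inter {K : Type*} [Field K] [CharZero K] (m N : ℕ)
    (r : ℕ → ℕ) (hmono : ∀ i j, i ≤ j → j ≤ N → r j ≤ r i) (hr0 : r 0 ≤ m + 1) :
    (∀ Q R : Polynomial K,
        Q * (∏ i ∈ range (N + 1), (X + C (i : K)) ^ (r i)) =
            bdiff ((X : Polynomial K) ^ (m + 1) * R) →
        ((∏ i ∈ range (N + 1), (X + C (i : K)) ^ (r i)).comp (X + 1)) ∣ R) ∧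
    ((Ideal.span {∏ i ∈ range (N + 1), (X + C (i : K)) ^ (r i)} : Set (Polynomial K)) ∩
        bdiff '' (Ideal.span {(X : Polynomial K) ^ (m + 1)} : Set (Polynomial K)) =
      bdiff '' (Ideal.span
        {(X : Polynomial K) ^ (m + 1) *
          (∏ i ∈ range (N + 1), (X + C (i : K)) ^ (r i)).comp (X + 1)} : Set (Polynomial K))) := by
  have hanti : ∀ i < N, r (i + 1) ≤ r i := fun i hi => hmono i (i + 1) i.le_succ hi
  have hdvd : ∀ R : K[X], bfactor K N r ∣ bdiff (X ^ (m + 1) * R) →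
      (bfactor K N r).comp (X + 1) ∣ R :=
    fun R => bfactor_comp_X_add_one_dvd_of_dvd_bdiff hanti hr0
  refine ⟨fun Q R h => hdvd R (Dvd.intro_left Q h), span_inter_image_bdiff_eq hdvd ?_⟩
  exact dvd_bdiff_mul_comp_X_add_one (bfactor_dvd_X_pow_mul_bfactor_comp_X_add_one hanti hr0)
end

section
/- Let d, m_1, …, m_d be positive integers, K a field of characteristic 0, and α_1, …, α_d ∈ K with α_1 = 0 and α_i − α_j ∉ ℤ for all i ≠ j (identifying ℤ with its image in K). Let Δ(P)(t) = P(t−1) − P(t). Suppose Q(t) ∈ K[t] and P(t) = Δ(t^{m_1+1}·R(t)) for some R ∈ K[t], and also P(t) = Δ((t+α_i)^{m_i+1}·R_i(t)) = Δ(t(t+α_i)·S_i(t)) for polynomials R_i, S_i ∈ K[t], for each i = 2,…,d. If P(t) = Δ(t^{m_1+1} Q(t)), then Π_{i=2}^d (t+α_i)^{m_i+1} divides Q(t); i.e., P ∈ Δ(Π_{i=1}^d (t+α_i)^{m_i+1} K[t]). -/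
/-! Two polynomials with the same backward difference differ by a constant, so they agree once
they agree at one point. Evaluating the hypotheses at `t = 0` and then at `t = -αᵢ` therefore
turns the equalities of differences into `t^{m₁+1} Q = (t + αᵢ)^{mᵢ+1} Rᵢ`, and the factors
`(t + αᵢ)^{mᵢ+1}` (`i ≥ 2`) are pairwise coprime and coprime to `t^{m₁+1}` because the `αᵢ` are
pairwise distinct. -/

open Polynomial Finset

section

variable {K : Type*} [Field K]

lemma eval_bdiff (A : K[X]) (x : K) :
    (bdiff A).eval x = A.eval (x - 1) - A.eval x := by
  simp [bdiff]

lemma eq_of_bdiff_eq_of_eval_eq [CharZero K] {A B : K[X]} (h : bdiff A = bdiff B) {x : K}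
    (hx : A.eval x = B.eval x) : A = B := by
  have hshift : ∀ n : ℕ, A.eval (x - n) = B.eval (x - n) := by
    intro n
    induction n with
    | zero => simpa using hx
    | succ n ih =>
      have hn := congrArg (eval (x - n)) h
      rw [eval_bdiff, eval_bdiff] at hn
      rw [Nat.cast_succ, ← sub_sub]
      linear_combination hn + ih
  refine eq_of_infinite_eval_eq A B ((Set.infinite_range_of_injective (f := fun n : ℕ => x - n) ?_).mono ?_)
  · exact fun m n hmn => Nat.cast_injective (sub_right_injective hmn)
  · rintro _ ⟨n, rfl⟩
    exact hshift n

lemma isCoprime_X_add_C_pow {a b : K} (hab : a ≠ b) (k l : ℕ) :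
    IsCoprime ((X + C a) ^ k) ((X + C b) ^ l) := by
  have h := isCoprime_X_sub_C_of_isUnit_sub (sub_ne_zero.mpr (neg_injective.ne hab)).isUnit
  simp only [map_neg, sub_neg_eq_add] at h
  exact h.pow

lemma X_add_C_pow_dvd_of_bdiff_eq [CharZero K] {a : K} (ha : a ≠ 0) {k l : ℕ} {Q R S : K[X]}
    (hR : bdiff (X ^ (k + 1) * Q) = bdiff ((X + C a) ^ (l + 1) * R))
    (hS : bdiff (X ^ (k + 1) * Q) = bdiff (X * (X + C a) * S)) :
    (X + C a) ^ (l + 1) ∣ Q := by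
  have hXS : X ^ (k + 1) * Q = X * (X + C a) * S :=
    eq_of_bdiff_eq_of_eval_eq hS (x := 0) (by simp)
  have hXR : X ^ (k + 1) * Q = (X + C a) ^ (l + 1) * R :=
    eq_of_bdiff_eq_of_eval_eq hR (x := -a) (by rw [hXS]; simp)
  have hcop : IsCoprime ((X + C a) ^ (l + 1)) ((X + C 0) ^ (k + 1)) :=
    isCoprime_X_add_C_pow ha _ _
  rw [C_0, add_zero] at hcop
  exact hcop.dvd_of_dvd_mul_left ⟨R, hXR⟩

end

theorem kernel_intersection_shifts_general {K : Type*} [Field K] [CharZero K]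
    (d : ℕ) (hd : 0 < d) (m : Fin d → ℕ) (α : Fin d → K)
    (hα0 : α ⟨0, hd⟩ = 0)
    (hαZ : ∀ i j : Fin d, i ≠ j → ∀ n : ℤ, α i - α j ≠ (n : K))
    (P Q : Polynomial K)
    (hRi : ∀ i : Fin d, i ≠ ⟨0, hd⟩ →
        ∃ Ri : Polynomial K, P = bdiff ((X + C (α i)) ^ (m i + 1) * Ri))
    (hSi : ∀ i : Fin d, i ≠ ⟨0, hd⟩ →
        ∃ Si : Polynomial K, P = bdiff (X * (X + C (α i)) * Si))
    (hQ : P = bdiff ((X : Polynomial K) ^ (m ⟨0, hd⟩ + 1) * Q)) :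
    (∏ i ∈ Finset.univ.erase ⟨0, hd⟩, (X + C (α i)) ^ (m i + 1)) ∣ Q ∧
    ∃ T : Polynomial K, P = bdiff ((∏ i, (X + C (α i)) ^ (m i + 1)) * T) := by
  set z : Fin d := ⟨0, hd⟩
  have hα_ne {i j : Fin d} (hij : i ≠ j) : α i ≠ α j :=
    fun h => hαZ i j hij 0 (by rw [h, sub_self, Int.cast_zero])
  have hprod : (∏ i ∈ univ.erase z, (X + C (α i)) ^ (m i + 1)) ∣ Q := by
    refine prod_dvd_of_coprime (fun i _ j _ hij => isCoprime_X_add_C_pow (hα_ne hij) _ _) ?_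
    intro i hi
    have hiz := (mem_erase.mp hi).1
    obtain ⟨Ri, hRi⟩ := hRi i hiz
    obtain ⟨Si, hSi⟩ := hSi i hiz
    exact X_add_C_pow_dvd_of_bdiff_eq (hα0 ▸ hα_ne hiz) (hQ.symm.trans hRi) (hQ.symm.trans hSi)
  obtain ⟨T, hT⟩ := hprod
  refine ⟨⟨T, hT⟩, T, ?_⟩
  rw [← mul_prod_erase univ _ (mem_univ z), hα0, C_0, add_zero, mul_assoc, ← hT, hQ]

/-- Let `d, m_1, …, m_d ≥ 1`, `K` a field of characteristic `0`, `α_1, …, α_d ∈ K`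
with `α_1 = 0` and `α_i - α_j ∉ ℤ` for `i ≠ j`.  Suppose `P = Δ(t^{m_1+1}·R)` for some
`R`, and for each `i = 2,…,d` there are `R_i, S_i` with
`P = Δ((t+α_i)^{m_i+1}·R_i) = Δ(t(t+α_i)·S_i)`.  If `P = Δ(t^{m_1+1}·Q)` then
`Π_{i=2}^d (t+α_i)^{m_i+1} ∣ Q`, i.e. `P ∈ Δ(Π_{i=1}^d (t+α_i)^{m_i+1}·K[t])`. -/
theorem kernel_intersection_shifts {K : Type*} [Field K] [CharZero K]
    (d : ℕ) (hd : 0 < d) (m : Fin d → ℕ) (hm : ∀ i, 1 ≤ m i) (α : Fin d → K)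
    (hα0 : α ⟨0, hd⟩ = 0)
    (hαZ : ∀ i j : Fin d, i ≠ j → ∀ n : ℤ, α i - α j ≠ (n : K))
    (P Q : Polynomial K)
    (hR : ∃ R : Polynomial K, P = bdiff ((X : Polynomial K) ^ (m ⟨0, hd⟩ + 1) * R))
    (hRi : ∀ i : Fin d, i ≠ ⟨0, hd⟩ →
        ∃ Ri : Polynomial K, P = bdiff ((X + C (α i)) ^ (m i + 1) * Ri))
    (hSi : ∀ i : Fin d, i ≠ ⟨0, hd⟩ →
        ∃ Si : Polynomial K, P = bdiff (X * (X + C (α i)) * Si))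
    (hQ : P = bdiff ((X : Polynomial K) ^ (m ⟨0, hd⟩ + 1) * Q)) :
    (∏ i ∈ Finset.univ.erase ⟨0, hd⟩, (X + C (α i)) ^ (m i + 1)) ∣ Q ∧
    ∃ T : Polynomial K, P = bdiff ((∏ i, (X + C (α i)) ^ (m i + 1)) * T) :=
  kernel_intersection_shifts_general d hd m α hα0 hαZ P Q hRi hSi hQ
end
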